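/- arXiv:1504.06738 — 5 statements merged into one kernel-verified Lean document; each statement's English description precedes it below -/
import Mathlib

section
/- Let T be a triangulated category and C a full subcategory containing 0 that is resolving (i.e., closed under extensions, closed under the shift [-1], and for any triangle U → V → W → U[1] with W ∈ C one has U ∈ C if and only if V ∈ C). Then the class C[+] = {X ∈ T | X ≅ C[n] for some C ∈ C and some n ≥ 0} is a triangulated subcategory of T, and it equals the smallest triangulated subcategory of T containing C. -/
open CategoryTheory Category Limits Pretriangulated

universe v u

namespace RelSing

variable {C : Type u} [Category.{v} C] [Preadditive C] [HasZeroObject C]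
  [HasShift C ℤ] [∀ n : ℤ, (shiftFunctor C n).Additive] [Pretriangulated C]

/-- `ω` is semi-selforthogonal (presilting): `Hom(M, M'[i]) = 0` for `M, M' ∈ ω`, `i > 0`. -/
def SemiSelfOrth (ω : Set C) : Prop :=
  ∀ M ∈ ω, ∀ M' ∈ ω, ∀ i : ℤ, 0 < i → ∀ f : M ⟶ M'⟦i⟧, f = 0

/-- `add ω`: closure of `ω` under zero objects, finite direct sums (expressed via
biproduct data) and direct summands (retracts). -/
inductive AddCat (ω : Set C) : C → Prop
  | of {X : C} (hX : X ∈ ω) : AddCat ω X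
  | zero {X : C} (hX : IsZero X) : AddCat ω X
  | sum {X Y Z : C} (i₁ : X ⟶ Z) (i₂ : Y ⟶ Z) (p₁ : Z ⟶ X) (p₂ : Z ⟶ Y)
      (h₁ : i₁ ≫ p₁ = 𝟙 X) (h₂ : i₂ ≫ p₂ = 𝟙 Y) (h₁₂ : i₁ ≫ p₂ = 0) (h₂₁ : i₂ ≫ p₁ = 0)
      (hZ : p₁ ≫ i₁ + p₂ ≫ i₂ = 𝟙 Z) (hX : AddCat ω X) (hY : AddCat ω Y) : AddCat ω Z
  | retract {X Y : C} (i : X ⟶ Y) (r : Y ⟶ X) (hir : i ≫ r = 𝟙 X) (hY : AddCat ω Y) :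
      AddCat ω X

/-- The left orthogonal `⊥ω`. -/
def leftPerp (ω : Set C) : Set C :=
  {N | ∀ M ∈ ω, ∀ i : ℤ, 0 < i → ∀ f : N ⟶ M⟦i⟧, f = 0}

/-- The right orthogonal `ω⊥`. -/
def rightPerp (ω : Set C) : Set C :=
  {N | ∀ M ∈ ω, ∀ i : ℤ, 0 < i → ∀ f : M ⟶ N⟦i⟧, f = 0}

/-- The Auslander class `X_ω`: objects `T₀` with triangles `T_i → M_i → T_{i+1} → T_i[1]`
for all `i ≥ 0`, `M_i ∈ add ω`, `T_i ∈ ⊥ω`. -/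
def Auslander (ω : Set C) : Set C :=
  {X | ∃ (T : ℕ → C) (M : ℕ → C) (f : ∀ i, T i ⟶ M i) (g : ∀ i, M i ⟶ T (i + 1))
      (h : ∀ i, T (i + 1) ⟶ (T i)⟦(1 : ℤ)⟧),
    T 0 = X ∧ (∀ i, Triangle.mk (f i) (g i) (h i) ∈ distTriang C) ∧
      (∀ i, AddCat ω (M i)) ∧ (∀ i, T i ∈ leftPerp ω)}

/-- The co-Auslander class `ωX`: objects `T₀` with triangles `T_{i+1} → M_i → T_i → T_{i+1}[1]`
for all `i ≥ 0`, `M_i ∈ add ω`, `T_i ∈ ω⊥`. -/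
def coAuslander (ω : Set C) : Set C :=
  {X | ∃ (T : ℕ → C) (M : ℕ → C) (f : ∀ i, T (i + 1) ⟶ M i) (g : ∀ i, M i ⟶ T i)
      (h : ∀ i, T i ⟶ (T (i + 1))⟦(1 : ℤ)⟧),
    T 0 = X ∧ (∀ i, Triangle.mk (f i) (g i) (h i) ∈ distTriang C) ∧
      (∀ i, AddCat ω (M i)) ∧ (∀ i, T i ∈ rightPerp ω)}

/-- `check S` (`S̬`): objects `X₀` with triangles `X_i → C_i → X_{i+1} → X_i[1]` for
`0 ≤ i ≤ r`, `C_i ∈ S`, `X_{r+1} = 0`. -/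
def CheckClass (S : Set C) : Set C :=
  {X | ∃ (r : ℕ) (T : ℕ → C) (M : ℕ → C) (f : ∀ i, T i ⟶ M i) (g : ∀ i, M i ⟶ T (i + 1))
      (h : ∀ i, T (i + 1) ⟶ (T i)⟦(1 : ℤ)⟧),
    T 0 = X ∧ IsZero (T (r + 1)) ∧ (∀ i ≤ r, Triangle.mk (f i) (g i) (h i) ∈ distTriang C) ∧
      (∀ i ≤ r, M i ∈ S)}

/-- `hat S` (`Ŝ`): objects `X₀` with triangles `X_{i+1} → C_i → X_i → X_{i+1}[1]` for
`0 ≤ i ≤ r`, `C_i ∈ S`, `X_{r+1} = 0`. -/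
def HatClass (S : Set C) : Set C :=
  {X | ∃ (r : ℕ) (T : ℕ → C) (M : ℕ → C) (f : ∀ i, T (i + 1) ⟶ M i) (g : ∀ i, M i ⟶ T i)
      (h : ∀ i, T i ⟶ (T (i + 1))⟦(1 : ℤ)⟧),
    T 0 = X ∧ IsZero (T (r + 1)) ∧ (∀ i ≤ r, Triangle.mk (f i) (g i) (h i) ∈ distTriang C) ∧
      (∀ i ≤ r, M i ∈ S)}

/-- A (strictly full) triangulated subcategory, as a predicate on sets of objects. -/
structure IsTriangulatedSub (S : Set C) : Prop where
  zero : ∀ X : C, IsZero X → X ∈ S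
  iso : ∀ {X Y : C}, (X ≅ Y) → X ∈ S → Y ∈ S
  shift : ∀ X ∈ S, ∀ n : ℤ, X⟦n⟧ ∈ S
  ext₂ : ∀ T ∈ distTriang C, T.obj₁ ∈ S → T.obj₃ ∈ S → T.obj₂ ∈ S

/-- `⟨S⟩`: the smallest triangulated subcategory containing `S`. -/
def genTriang (S : Set C) : Set C :=
  ⋂₀ {U : Set C | S ⊆ U ∧ IsTriangulatedSub U}

/-- `S[+] = {X | X ≅ C[n], C ∈ S, n ≥ 0}`. -/
def plusClass (S : Set C) : Set C :=
  {X | ∃ Y ∈ S, ∃ n : ℕ, Nonempty (X ≅ Y⟦(n : ℤ)⟧)}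

/-- `S[-] = {X | X ≅ C[n], C ∈ S, n ≤ 0}`. -/
def minusClass (S : Set C) : Set C :=
  {X | ∃ Y ∈ S, ∃ n : ℕ, Nonempty (X ≅ Y⟦(-(n : ℤ))⟧)}

/-- `f` factors through an object of `add ω`. -/
def FactorsThruAdd (ω : Set C) {X Y : C} (f : X ⟶ Y) : Prop :=
  ∃ (M : C) (g : X ⟶ M) (h : M ⟶ Y), AddCat ω M ∧ g ≫ h = f

/-- The `ω`-Gorenstein objects: `G_ω = ωX ∩ X_ω`. -/
def Gor (ω : Set C) : Set C := coAuslander ω ∩ Auslander ω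


end RelSing

open RelSing

variable {C : Type u} [Category.{v} C] [Preadditive C] [HasZeroObject C]
  [HasShift C ℤ] [∀ n : ℤ, (shiftFunctor C n).Additive] [Pretriangulated C]

/-- If `S` is a resolving subcategory of a triangulated category (contains zero objects,
closed under isomorphisms, extensions and `[-1]`), then `S[+]` is a triangulated
subcategory and equals the smallest triangulated subcategory containing `S`. -/
theorem stmt0 (S : Set C)
    (hzero : ∀ X : C, IsZero X → X ∈ S)
    (hiso : ∀ {X Y : C}, (X ≅ Y) → X ∈ S → Y ∈ S)
    (hshift : ∀ X ∈ S, X⟦(-1 : ℤ)⟧ ∈ S)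
    (hext : ∀ T ∈ distTriang C, T.obj₁ ∈ S → T.obj₃ ∈ S → T.obj₂ ∈ S) :
    IsTriangulatedSub (plusClass S) ∧ plusClass S = genTriang S := by
  -- S is closed under nonpositive shifts
  have hneg : ∀ Y ∈ S, ∀ k : ℕ, Y⟦(-(k : ℤ))⟧ ∈ S := by
    intro Y hY k
    induction k with
    | zero =>
        refine hiso ?_ hY
        exact (((shiftFunctorZero C ℤ).app Y).symm.trans
          (eqToIso (by norm_num)))
    | succ k ih =>
        refine hiso (Iso.symm ?_) (hshift _ ih)
        exact (shiftFunctorAdd' C (-(k : ℤ)) (-1) (-((k + 1 : ℕ) : ℤ))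
          (by push_cast; ring)).app Y
  have hnonpos : ∀ Y ∈ S, ∀ n : ℤ, n ≤ 0 → Y⟦n⟧ ∈ S := by
    intro Y hY n hn
    obtain ⟨k, rfl⟩ : ∃ k : ℕ, n = -(k : ℤ) := ⟨n.natAbs, by omega⟩
    exact hneg Y hY k
  -- membership helper for plusClass with arbitrary integer shift
  have memPlus : ∀ (X : C) (Y : C), Y ∈ S → ∀ n : ℤ, (X ≅ Y⟦n⟧) → X ∈ plusClass S := by
    intro X Y hY n e
    by_cases hn : 0 ≤ n
    · obtain ⟨k, rfl⟩ : ∃ k : ℕ, n = (k : ℤ) := ⟨n.toNat, by omega⟩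
      exact ⟨Y, hY, k, ⟨e⟩⟩
    · refine ⟨Y⟦n⟧, hnonpos Y hY n (by omega), 0, ⟨e.trans ?_⟩⟩
      exact ((shiftFunctorZero C ℤ).app (Y⟦n⟧)).symm.trans (eqToIso (by norm_num))
  have hsub : IsTriangulatedSub (plusClass S) := by
    constructor
    · intro X hX
      refine ⟨X, hzero X hX, 0, ⟨?_⟩⟩
      exact ((shiftFunctorZero C ℤ).app X).symm.trans (eqToIso (by norm_num))
    · rintro X Y e ⟨Z, hZ, n, ⟨e'⟩⟩
      exact ⟨Z, hZ, n, ⟨e.symm.trans e'⟩⟩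
    · rintro X ⟨Y, hY, m, ⟨e⟩⟩ n
      refine memPlus _ Y hY ((m : ℤ) + n) ?_
      exact ((shiftFunctor C n).mapIso e).trans
        ((shiftFunctorAdd' C (m : ℤ) n ((m : ℤ) + n) rfl).app Y).symm
    · rintro T hT ⟨A, hA, a, ⟨e₁⟩⟩ ⟨B, hB, b, ⟨e₃⟩⟩
      set k : ℤ := ((max a b : ℕ) : ℤ) with hk
      have hT' := Pretriangulated.Triangle.shift_distinguished T hT (-k)
      have h₁ : ((CategoryTheory.shiftFunctor (Triangle C) (-k)).obj T).obj₁ ∈ S := by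
        refine hiso ?_ (hnonpos A hA ((a : ℤ) + -k) (by simp only [hk]; push_cast; omega))
        exact (((shiftFunctorAdd' C (a : ℤ) (-k) ((a : ℤ) + -k) rfl).app A)).trans
          ((shiftFunctor C (-k)).mapIso e₁.symm)
      have h₃ : ((CategoryTheory.shiftFunctor (Triangle C) (-k)).obj T).obj₃ ∈ S := by
        refine hiso ?_ (hnonpos B hB ((b : ℤ) + -k) (by simp only [hk]; push_cast; omega))
        exact (((shiftFunctorAdd' C (b : ℤ) (-k) ((b : ℤ) + -k) rfl).app B)).trans
          ((shiftFunctor C (-k)).mapIso e₃.symm)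
      have h₂ := hext _ hT' h₁ h₃
      refine memPlus _ _ h₂ k ?_
      exact ((shiftFunctorCompIsoId C (-k) k (by ring)).app T.obj₂).symm
  refine ⟨hsub, ?_⟩
  have hSsub : S ⊆ plusClass S := by
    intro X hX
    refine ⟨X, hX, 0, ⟨((shiftFunctorZero C ℤ).app X).symm.trans (eqToIso (by norm_num))⟩⟩
  apply le_antisymm
  · rintro X ⟨Y, hY, n, ⟨e⟩⟩
    intro U hU
    exact hU.2.iso e.symm (hU.2.shift Y (hU.1 hY) n)
  · intro X hX
    exact hX (plusClass S) ⟨hSsub, hsub⟩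
end

section
/- Let T be a triangulated category and C a full subcategory containing 0 that is coresolving (closed under extensions and under the shift [1]). Then the class C[-] = {X ∈ T | X ≅ C[n] for some C ∈ C and some n ≤ 0} is a triangulated subcategory of T and equals the smallest triangulated subcategory of T containing C. -/
open CategoryTheory Category Limits Pretriangulated

universe v u

open RelSing

variable {C : Type u} [Category.{v} C] [Preadditive C] [HasZeroObject C]
  [HasShift C ℤ] [∀ n : ℤ, (shiftFunctor C n).Additive] [Pretriangulated C]

/-- If `S` is a coresolving subcategory of a triangulated category (contains zero objects,
closed under isomorphisms, extensions and `[1]`), then `S[-]` is a triangulated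
subcategory and equals the smallest triangulated subcategory containing `S`. -/
theorem stmt1 (S : Set C)
    (hzero : ∀ X : C, IsZero X → X ∈ S)
    (hiso : ∀ {X Y : C}, (X ≅ Y) → X ∈ S → Y ∈ S)
    (hshift : ∀ X ∈ S, X⟦(1 : ℤ)⟧ ∈ S)
    (hext : ∀ T ∈ distTriang C, T.obj₁ ∈ S → T.obj₃ ∈ S → T.obj₂ ∈ S) :
    IsTriangulatedSub (minusClass S) ∧ minusClass S = genTriang S := by
  -- S is closed under nonnegative shifts
  have hshiftNat : ∀ Y ∈ S, ∀ k : ℕ, Y⟦(k : ℤ)⟧ ∈ S := by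
    intro Y hY k
    induction k with
    | zero => exact hiso ((shiftFunctorZero C ℤ).symm.app Y) hY
    | succ k ih =>
      refine hiso (Iso.symm ?_) (hshift _ ih)
      exact (shiftFunctorAdd' C (k : ℤ) 1 ((k + 1 : ℕ) : ℤ) (by push_cast; ring)).app Y
  -- key lemma: if X ≅ Y⟦m⟧ with Y ∈ S, any m : ℤ, then X ∈ minusClass S
  have key : ∀ (Y : C), Y ∈ S → ∀ (m : ℤ) (X : C), (X ≅ Y⟦m⟧) → X ∈ minusClass S := by
    intro Y hY m X e
    rcases Int.eq_nat_or_neg m with ⟨k, hk | hk⟩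
    · refine ⟨Y⟦(k : ℤ)⟧, hshiftNat Y hY k, 0, ⟨?_⟩⟩
      refine (e ≪≫ eqToIso (by rw [hk])) ≪≫ ?_
      exact ((shiftFunctorZero' C (-((0 : ℕ) : ℤ)) (by simp)).app _).symm
    · exact ⟨Y, hY, k, ⟨e ≪≫ eqToIso (by rw [hk])⟩⟩
  -- shift of a member of minusClass by any integer
  have minusShift : ∀ X ∈ minusClass S, ∀ m : ℤ, X⟦m⟧ ∈ minusClass S := by
    rintro X ⟨Y, hY, n, ⟨e⟩⟩ m
    refine key Y hY (-(n : ℤ) + m) _ ?_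
    exact (shiftFunctor C m).mapIso e ≪≫
      ((shiftFunctorAdd' C (-(n : ℤ)) m (-(n : ℤ) + m) rfl).app Y).symm
  -- from X⟦k⟧ ∈ S (k : ℕ) conclude X ∈ minusClass S
  have ofShiftMem : ∀ (X : C) (k : ℕ), X⟦(k : ℤ)⟧ ∈ S → X ∈ minusClass S := by
    intro X k h
    refine ⟨X⟦(k : ℤ)⟧, h, k, ⟨?_⟩⟩
    exact ((shiftFunctorCompIsoId C (k : ℤ) (-(k : ℤ)) (by ring)).app X).symm
  -- extension closure
  have hsub : IsTriangulatedSub (minusClass S) := by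
    constructor
    · intro X hX
      exact key X (hzero X hX) 0 X ((shiftFunctorZero C ℤ).symm.app X)
    · rintro X Y e ⟨Z, hZ, n, ⟨e'⟩⟩
      exact ⟨Z, hZ, n, ⟨e.symm ≪≫ e'⟩⟩
    · exact minusShift
    · rintro T hT ⟨Y₁, hY₁, n₁, ⟨e₁⟩⟩ ⟨Y₃, hY₃, n₃, ⟨e₃⟩⟩
      set n : ℕ := max n₁ n₃ with hn
      have hT' := Pretriangulated.Triangle.shift_distinguished T hT (n : ℤ)
      have memS : ∀ (Yi : C), Yi ∈ S → ∀ (ni : ℕ), ni ≤ n → ∀ (Xi : C),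
          (Xi ≅ Yi⟦(-(ni : ℤ))⟧) → Xi⟦(n : ℤ)⟧ ∈ S := by
        intro Yi hYi ni hni Xi e
        refine hiso (Iso.symm ?_) (hshiftNat Yi hYi (n - ni))
        refine (shiftFunctor C (n : ℤ)).mapIso e ≪≫
          ((shiftFunctorAdd' C (-(ni : ℤ)) (n : ℤ) (((n - ni : ℕ) : ℤ))
            (by push_cast [Nat.cast_sub hni]; ring)).app Yi).symm ≪≫ eqToIso rfl
      have h₁ : T.obj₁⟦(n : ℤ)⟧ ∈ S := memS Y₁ hY₁ n₁ (le_max_left _ _) _ e₁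
      have h₃ : T.obj₃⟦(n : ℤ)⟧ ∈ S := memS Y₃ hY₃ n₃ (le_max_right _ _) _ e₃
      have h₂ : T.obj₂⟦(n : ℤ)⟧ ∈ S := hext _ hT' h₁ h₃
      exact ofShiftMem T.obj₂ n h₂
  refine ⟨hsub, ?_⟩
  have hSsub : S ⊆ minusClass S := fun Y hY =>
    key Y hY 0 Y ((shiftFunctorZero C ℤ).symm.app Y)
  apply le_antisymm
  · -- minusClass S ⊆ genTriang S
    rintro X ⟨Y, hY, n, ⟨e⟩⟩ U ⟨hSU, hU⟩
    exact hU.iso e.symm (hU.shift Y (hSU hY) _)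
  · -- genTriang S ⊆ minusClass S
    intro X hX
    exact hX (minusClass S) ⟨hSsub, hsub⟩
end

section
/- Let ω be a semi-selforthogonal subcategory of a triangulated category T. Then every morphism f : X → Y with X ∈ ω̌ (the class of objects admitting finite resolutions by triangles X_i → C_i → X_{i+1} with C_i ∈ add ω) and Y ∈ ωX (the co-Auslander class) factors through an object of add ω. -/
open CategoryTheory Category Limits Pretriangulated

universe v u

open RelSing

variable {C : Type u} [Category.{v} C] [Preadditive C] [HasZeroObject C]
  [HasShift C ℤ] [∀ n : ℤ, (shiftFunctor C n).Additive] [Pretriangulated C]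

/-- Maps from objects of `add ω` to positive shifts of objects of `ω⊥` vanish. -/
lemma hom_addCat_to_shift_rightPerp (ω : Set C) {Z : C} (hZ : Z ∈ rightPerp ω)
    {M : C} (hM : AddCat ω M) {n : ℤ} (hn : 0 < n) (g : M ⟶ Z⟦n⟧) : g = 0 := by
  induction hM with
  | of hX => exact hZ _ hX n hn g
  | zero hX => exact hX.eq_of_src g 0
  | sum i₁ i₂ p₁ p₂ h₁ h₂ h₁₂ h₂₁ hsum hX hY ihX ihY =>
      have : g = (p₁ ≫ i₁ + p₂ ≫ i₂) ≫ g := by rw [hsum, id_comp]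
      rw [this, Preadditive.add_comp, assoc, assoc, ihX (i₁ ≫ g), ihY (i₂ ≫ g),
        comp_zero, comp_zero, add_zero]
  | retract i r hir hY ih =>
      have : g = (i ≫ r) ≫ g := by rw [hir, id_comp]
      rw [this, assoc, ih (r ≫ g), comp_zero]

/-- Transfer vanishing of `Hom(A, Z⟦n+1⟧)` to vanishing of `Hom(A⟦-1⟧, Z⟦n⟧)`. -/
lemma hom_shift_neg_one_zero {A Z : C} {n : ℤ}
    (h : ∀ u : A ⟶ Z⟦n + 1⟧, u = 0) (u : A⟦(-1 : ℤ)⟧ ⟶ Z⟦n⟧) : u = 0 := by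
  apply (shiftFunctor C (1 : ℤ)).map_injective
  rw [Functor.map_zero]
  have e := h ((shiftFunctorCompIsoId C (-1 : ℤ) 1 (by norm_num)).inv.app A ≫
    (shiftFunctor C (1 : ℤ)).map u ≫ (shiftFunctorAdd' C n 1 (n + 1) rfl).inv.app Z)
  have : (shiftFunctor C (1 : ℤ)).map u =
      (shiftFunctorCompIsoId C (-1 : ℤ) 1 (by norm_num)).hom.app A ≫
      ((shiftFunctorCompIsoId C (-1 : ℤ) 1 (by norm_num)).inv.app A ≫
        (shiftFunctor C (1 : ℤ)).map u ≫ (shiftFunctorAdd' C n 1 (n + 1) rfl).inv.app Z) ≫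
      (shiftFunctorAdd' C n 1 (n + 1) rfl).hom.app Z := by simp
  rw [this, e, zero_comp, comp_zero]

/-- Maps from objects of `check(add ω)` to positive shifts of objects of `ω⊥` vanish. -/
lemma hom_check_to_shift_rightPerp (ω : Set C) {Z : C} (hZ : Z ∈ rightPerp ω)
    {X : C} (hX : X ∈ CheckClass {A | AddCat ω A})
    {n : ℤ} (hn : 0 < n) (g : X ⟶ Z⟦n⟧) : g = 0 := by
  obtain ⟨r, T, M, f, g', h, hT0, hzero, htri, hM⟩ := hX
  subst hT0
  suffices key : ∀ d : ℕ, ∀ n : ℤ, 0 < n → ∀ φ : T (r + 1 - d) ⟶ Z⟦n⟧, φ = 0 by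
    have hkey := key (r + 1) n hn
    have h0 : r + 1 - (r + 1) = 0 := by omega
    rw [h0] at hkey
    exact hkey g
  intro d
  induction d with
  | zero => exact fun n hn φ => hzero.eq_of_src φ 0
  | succ d ih =>
      intro n hn φ
      by_cases hd : d ≤ r
      · have hj : r + 1 - (d + 1) ≤ r := by omega
        have hj1 : r + 1 - (d + 1) + 1 = r + 1 - d := by omega
        rw [← hj1] at ih
        have htr := htri _ hj
        -- the connecting map from T (j+1) ⟦-1⟧ composed with φ vanishes
        have hcond : (Triangle.mk (f (r + 1 - (d + 1))) (g' _) (h _)).invRotate.mor₁ ≫ φ = 0 := by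
          apply hom_shift_neg_one_zero
          intro u
          exact ih (n + 1) (by omega) u
        obtain ⟨ψ, hψ⟩ := Triangle.yoneda_exact₂ _ (inv_rot_of_distTriang _ htr) φ hcond
        rw [hψ, hom_addCat_to_shift_rightPerp ω hZ (hM _ hj) hn ψ]
        exact comp_zero
      · have heq : r + 1 - (d + 1) = r + 1 - d := by omega
        rw [← heq] at ih
        exact ih n hn φ

/-- For a semi-selforthogonal `ω`, every morphism `f : X ⟶ Y` with
`X ∈ check(add ω)` and `Y ∈ ωX` (the co-Auslander class) factors through an
object of `add ω`. -/
theorem stmt6 (ω : Set C) (hω : SemiSelfOrth ω)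
    {X Y : C} (hX : X ∈ CheckClass {A | AddCat ω A}) (hY : Y ∈ coAuslander ω)
    (f : X ⟶ Y) :
    FactorsThruAdd ω f := by
  obtain ⟨T, M, a, b, c, hT0, htri, hM, hperp⟩ := hY
  subst hT0
  have hcond : f ≫ (Triangle.mk (a 0) (b 0) (c 0)).mor₃ = 0 :=
    hom_check_to_shift_rightPerp ω (hperp 1) hX (by norm_num) _
  obtain ⟨g, hg⟩ := Triangle.coyoneda_exact₃ _ (htri 0) f hcond
  exact ⟨M 0, g, b 0, hM 0, hg.symm⟩
end

section
/- Let ω be a semi-selforthogonal subcategory of a triangulated category T. If X ∈ ω̌ (X is finitely coresolved by add ω) and Y ∈ ωX (the co-Auslander class), then Hom_T(X, Y[1]) = 0. -/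
open CategoryTheory Category Limits Pretriangulated

universe v u

/-! Every `Y ∈ ωX` lies in `ω⊥`, so `add ω` is contained in `⊥{Y}`, the class of objects `A`
with `Hom(A, Y[n]) = 0` for all `n > 0`. This class contains `0` and contains the first vertex
of a triangle `A → M → A' → A[1]` whose other two vertices it contains, so walking the finite
coresolution of `X` down from `X_{r+1} = 0` gives `X ∈ ⊥{Y}`. -/

namespace RelSing

variable {C : Type u} [Category.{v} C] [Preadditive C] [HasShift C ℤ]

lemma AddCat.mem_leftPerp {ω 𝒴 : Set C} (h𝒴 : 𝒴 ⊆ rightPerp ω) {M : C} (hM : AddCat ω M) :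
    M ∈ leftPerp 𝒴 := by
  intro Y hY n hn
  induction hM with
  | of hM => exact h𝒴 hY _ hM n hn
  | zero hM => exact fun φ => hM.eq_of_src φ 0
  | sum i₁ i₂ p₁ p₂ _ _ _ _ hZ _ _ ih₁ ih₂ =>
    intro φ
    rw [← id_comp φ, ← hZ, Preadditive.add_comp, assoc, assoc, ih₁ (i₁ ≫ φ), ih₂ (i₂ ≫ φ),
      comp_zero, comp_zero, add_zero]
  | retract i r hir _ ih =>
    intro φ
    rw [← id_comp φ, ← hir, assoc, ih (r ≫ φ), comp_zero]

lemma hom_shift_neg_one_eq_zero [(shiftFunctor C (1 : ℤ)).Additive] {A B : C} {n : ℤ} (h : ∀ v : A ⟶ B⟦n + 1⟧, v = 0)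
    (u : A⟦(-1 : ℤ)⟧ ⟶ B⟦n⟧) : u = 0 := by
  rw [← (shiftFunctor C (1 : ℤ)).map_eq_zero_iff]
  have := h ((shiftFunctorCompIsoId C (-1 : ℤ) 1 (by omega)).inv.app A ≫ u⟦(1 : ℤ)⟧' ≫
    (shiftFunctorAdd' C n 1 (n + 1) rfl).inv.app B)
  simpa only [Preadditive.IsIso.comp_left_eq_zero, Preadditive.IsIso.comp_right_eq_zero]
    using this

end RelSing

open RelSing

variable {C : Type u} [Category.{v} C] [Preadditive C] [HasZeroObject C]
  [HasShift C ℤ] [∀ n : ℤ, (shiftFunctor C n).Additive] [Pretriangulated C]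

namespace RelSing

lemma coAuslander_subset_rightPerp (ω : Set C) : coAuslander ω ⊆ rightPerp ω := by
  rintro Y ⟨T, -, -, -, -, rfl, -, -, hT⟩
  exact hT 0

lemma mem_leftPerp_of_distTriang {𝒴 : Set C} {T : Triangle C} (hT : T ∈ distTriang C)
    (h₂ : T.obj₂ ∈ leftPerp 𝒴) (h₃ : T.obj₃ ∈ leftPerp 𝒴) : T.obj₁ ∈ leftPerp 𝒴 := by
  intro Y hY n hn g
  obtain ⟨ψ, rfl⟩ := Triangle.yoneda_exact₂ _ (inv_rot_of_distTriang _ hT) g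
    (hom_shift_neg_one_eq_zero (h₃ Y hY (n + 1) (by omega)) _)
  exact (h₂ Y hY n hn ψ).symm ▸ comp_zero

lemma CheckClass.subset_leftPerp {S 𝒴 : Set C} (hS : S ⊆ leftPerp 𝒴) :
    CheckClass S ⊆ leftPerp 𝒴 := by
  rintro X ⟨r, T, M, f, g, h, rfl, hzero, hdist, hM⟩
  refine Nat.decreasingInduction (motive := fun k _ => T k ∈ leftPerp 𝒴) (n := r + 1)
    (fun k hk hsucc => ?_) (fun Y _ n _ φ => hzero.eq_of_src φ 0) (Nat.zero_le _)
  exact mem_leftPerp_of_distTriang (hdist k (by omega)) (hS (hM k (by omega))) hsucc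

end RelSing

theorem stmt7_general (ω : Set C)
    {X Y : C} (hX : X ∈ CheckClass {A | AddCat ω A}) (hY : Y ∈ coAuslander ω)
    (f : X ⟶ Y⟦(1 : ℤ)⟧) :
    f = 0 := by
  have hYω : {Y} ⊆ rightPerp ω :=
    Set.singleton_subset_iff.mpr (coAuslander_subset_rightPerp ω hY)
  exact CheckClass.subset_leftPerp (fun _ hM => AddCat.mem_leftPerp hYω hM) hX Y rfl 1 one_pos f

/-- For a semi-selforthogonal `ω`, if `X ∈ check(add ω)` and `Y ∈ ωX`
(the co-Auslander class), then `Hom(X, Y[1]) = 0`. -/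
theorem stmt7 (ω : Set C) (hω : SemiSelfOrth ω)
    {X Y : C} (hX : X ∈ CheckClass {A | AddCat ω A}) (hY : Y ∈ coAuslander ω)
    (f : X ⟶ Y⟦(1 : ℤ)⟧) :
    f = 0 :=
  stmt7_general ω hX hY f
end

section
/- Let ω be a semi-selforthogonal subcategory of a triangulated category T. Then the class of ω-Gorenstein objects intersected with the smallest triangulated subcategory generated by add ω equals add ω: G_ω ∩ ⟨add ω⟩ = add ω. -/
/-!
An object `A ∈ ωX` sits in a triangle `T₁ → M₀ → A → T₁[1]` with `M₀ ∈ add ω` and `T₁ ∈ ω⊥`.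
The objects `Y` with `Hom(Z, Y[i]) = 0` for all `Z ∈ ⊥ω` and all large `i` form a triangulated
subcategory containing `add ω`, hence containing `⟨add ω⟩`; if `A ∈ ⟨add ω⟩` then so is `T₁`.
For `A ∈ X_ω`, dimension shifting along its `⊥ω`-coresolution `A = T₀ → M₀ → T₁ → ⋯` turns the
vanishing of `Hom(T_k, Y[k+1])` for large `k` into `Hom(A, Y[1]) = 0` whenever `Y ∈ ω⊥` is such an
object. Applied to `Y = T₁`, the connecting map `A → T₁[1]` vanishes, so the triangle splits and
`A` is a direct summand of `M₀`. Conversely, semi-selforthogonality puts `add ω` inside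
`⊥ω ∩ ω⊥`, so the trivial triangles `A → A → 0 → A[1]` show `add ω ⊆ G_ω`.
-/

open CategoryTheory Category Limits Pretriangulated

universe v u

open RelSing

variable {C : Type u} [Category.{v} C] [Preadditive C] [HasZeroObject C]
  [HasShift C ℤ] [∀ n : ℤ, (shiftFunctor C n).Additive] [Pretriangulated C]

namespace RelSing

lemma forall_hom_eq_zero_of_iso {D : Type*} [Category D] [HasZeroMorphisms D] {Z A B : D}
    (e : A ≅ B) (h : ∀ f : Z ⟶ A, f = 0) (f : Z ⟶ B) : f = 0 := by
  simpa using h (f ≫ e.inv) =≫ e.hom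

section AddCat

variable {D : Type*} [Category D] [Preadditive D] {ω : Set D}

lemma AddCat.hom_eq_zero {W A : D} (hW : ∀ M ∈ ω, ∀ f : M ⟶ W, f = 0) (hA : AddCat ω A)
    (f : A ⟶ W) : f = 0 := by
  induction hA with
  | of hM => exact hW _ hM f
  | zero hX => exact hX.eq_of_src f 0
  | sum i₁ i₂ p₁ p₂ _ _ _ _ hZ _ _ ih₁ ih₂ =>
      rw [← id_comp f, ← hZ, Preadditive.add_comp, assoc, assoc, ih₁ (i₁ ≫ f), ih₂ (i₂ ≫ f)]
      simp
  | retract i r hir _ ih => rw [← id_comp f, ← hir, assoc, ih (r ≫ f), comp_zero]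

lemma AddCat.hom_map_eq_zero {E : Type*} [Category E] [Preadditive E] (G : D ⥤ E) [G.Additive]
    {Z : E} {A : D} (hZ : ∀ M ∈ ω, ∀ f : Z ⟶ G.obj M, f = 0) (hA : AddCat ω A)
    (f : Z ⟶ G.obj A) : f = 0 := by
  induction hA with
  | of hM => exact hZ _ hM f
  | zero hX => exact (G.map_isZero hX).eq_of_tgt f 0
  | sum i₁ i₂ p₁ p₂ _ _ _ _ hZ _ _ ih₁ ih₂ =>
      rw [← comp_id f, ← G.map_id, ← hZ, G.map_add, Preadditive.comp_add, G.map_comp, G.map_comp,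
        ← assoc, ← assoc, ih₁ (f ≫ G.map p₁), ih₂ (f ≫ G.map p₂)]
      simp
  | retract i r hir _ ih =>
      rw [← comp_id f, ← G.map_id, ← hir, G.map_comp, ← assoc, ih (f ≫ G.map i), zero_comp]

variable [HasShift D ℤ]

lemma AddCat.hom_eq_zero_of_mem_rightPerp {Y A : D} (hY : Y ∈ rightPerp ω) (hA : AddCat ω A)
    {i : ℤ} (hi : 0 < i) (f : A ⟶ Y⟦i⟧) : f = 0 :=
  hA.hom_eq_zero (fun M hM => hY M hM i hi) f

lemma SemiSelfOrth.addCat_subset_leftPerp (hω : SemiSelfOrth ω) :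
    {A | AddCat ω A} ⊆ leftPerp ω :=
  fun _ hA M hM _ hi f => hA.hom_eq_zero_of_mem_rightPerp (fun M' hM' => hω M' hM' M hM) hi f

variable [∀ n : ℤ, (shiftFunctor D n).Additive]

lemma AddCat.hom_eq_zero_of_mem_leftPerp {Z A : D} (hZ : Z ∈ leftPerp ω) (hA : AddCat ω A)
    {i : ℤ} (hi : 0 < i) (f : Z ⟶ A⟦i⟧) : f = 0 :=
  hA.hom_map_eq_zero (shiftFunctor D i) (fun M hM => hZ M hM i hi) f

lemma SemiSelfOrth.addCat_subset_rightPerp (hω : SemiSelfOrth ω) :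
    {A | AddCat ω A} ⊆ rightPerp ω :=
  fun _ hA M hM _ hi f => hA.hom_eq_zero_of_mem_leftPerp (hω M hM) hi f

def eventualRightPerp (S : Set D) : Set D :=
  {Y | ∃ N : ℤ, ∀ Z ∈ S, ∀ i ≥ N, ∀ f : Z ⟶ Y⟦i⟧, f = 0}

lemma addCat_subset_eventualRightPerp :
    {A | AddCat ω A} ⊆ eventualRightPerp (leftPerp ω) :=
  fun _ hA => ⟨1, fun _ hZ _ hi f => hA.hom_eq_zero_of_mem_leftPerp hZ (by omega) f⟩

end AddCat

section Triangulated

open ZeroObject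

variable {ω : Set C}

lemma hom_eq_zero_of_distTriang {T : Triangle C} (hT : T ∈ distTriang C) {W : C}
    (h₂ : ∀ f : T.obj₂ ⟶ W, f = 0) (h₃ : ∀ f : T.obj₃ ⟶ W⟦(1 : ℤ)⟧, f = 0)
    (f : T.obj₁ ⟶ W) : f = 0 := by
  obtain ⟨g, hg⟩ := Triangle.yoneda_exact₂ _ (rot_of_distTriang _ (rot_of_distTriang _ hT))
    (f⟦(1 : ℤ)⟧') (h₃ _)
  obtain ⟨g', rfl⟩ := (shiftFunctor C (1 : ℤ)).map_surjective (g : T.obj₂⟦(1 : ℤ)⟧ ⟶ W⟦(1 : ℤ)⟧)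
  obtain rfl : g' = 0 := h₂ g'
  exact (shiftFunctor C (1 : ℤ)).map_injective
    (by rw [hg, Functor.map_zero, Functor.map_zero]; exact comp_zero)

lemma AddCat.of_distTriang_mor₃_eq_zero {T : Triangle C} (hT : T ∈ distTriang C)
    (h : T.mor₃ = 0) (hA : AddCat ω T.obj₂) : AddCat ω T.obj₃ := by
  obtain ⟨s, hs⟩ := Triangle.coyoneda_exact₃ _ hT (𝟙 T.obj₃) (by rw [h, comp_zero])
  exact AddCat.retract s T.mor₂ hs.symm hA

lemma SemiSelfOrth.addCat_mem_auslander (hω : SemiSelfOrth ω) {A : C} (hA : AddCat ω A) :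
    A ∈ Auslander ω := by
  let T : ℕ → C := fun | 0 => A | _ + 1 => 0
  have hT : ∀ i, AddCat ω (T i) := fun | 0 => hA | _ + 1 => AddCat.zero (isZero_zero C)
  exact ⟨T, T, fun _ => 𝟙 _, fun _ => 0, fun _ => 0, rfl,
    fun _ => contractible_distinguished _, hT, fun i => hω.addCat_subset_leftPerp (hT i)⟩

lemma SemiSelfOrth.addCat_mem_coAuslander (hω : SemiSelfOrth ω) {A : C} (hA : AddCat ω A) :
    A ∈ coAuslander ω := by
  let T : ℕ → C := fun | 0 => A | _ + 1 => 0
  have hT : ∀ i, AddCat ω (T i) := fun | 0 => hA | _ + 1 => AddCat.zero (isZero_zero C)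
  exact ⟨T, T, fun _ => 0, fun _ => 𝟙 _, fun _ => 0, rfl,
    fun _ => contractible_distinguished₁ _, hT, fun i => hω.addCat_subset_rightPerp (hT i)⟩

variable {S U : Set C}

lemma IsTriangulatedSub.ext₁ (hU : IsTriangulatedSub U) {T : Triangle C} (hT : T ∈ distTriang C)
    (h₂ : T.obj₂ ∈ U) (h₃ : T.obj₃ ∈ U) : T.obj₁ ∈ U :=
  hU.ext₂ _ (inv_rot_of_distTriang _ hT) (hU.shift _ h₃ (-1)) h₂

lemma subset_genTriang : S ⊆ genTriang S :=
  fun _ hA => Set.mem_sInter.2 fun _ hU => hU.1 hA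

lemma genTriang_subset (hS : S ⊆ U) (hU : IsTriangulatedSub U) : genTriang S ⊆ U :=
  fun _ hX => Set.mem_sInter.1 hX U ⟨hS, hU⟩

lemma isTriangulatedSub_genTriang : IsTriangulatedSub (genTriang S) where
  zero X hX := Set.mem_sInter.2 fun _ hU => hU.2.zero X hX
  iso e hX := Set.mem_sInter.2 fun U hU => hU.2.iso e (Set.mem_sInter.1 hX U hU)
  shift X hX n := Set.mem_sInter.2 fun U hU => hU.2.shift X (Set.mem_sInter.1 hX U hU) n
  ext₂ T hT h₁ h₃ := Set.mem_sInter.2 fun U hU =>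
    hU.2.ext₂ T hT (Set.mem_sInter.1 h₁ U hU) (Set.mem_sInter.1 h₃ U hU)

lemma isTriangulatedSub_eventualRightPerp :
    IsTriangulatedSub (eventualRightPerp S) where
  zero X hX := ⟨0, fun _ _ i _ f => ((shiftFunctor C i).map_isZero hX).eq_of_tgt f 0⟩
  iso := fun e ⟨N, hN⟩ => ⟨N, fun Z hZ i hi =>
    forall_hom_eq_zero_of_iso ((shiftFunctor C i).mapIso e) (hN Z hZ i hi)⟩
  shift := fun X ⟨N, hN⟩ n => ⟨N - n, fun Z hZ i hi =>
    forall_hom_eq_zero_of_iso ((shiftFunctorAdd' C n i (n + i) rfl).app X)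
      (hN Z hZ (n + i) (by omega))⟩
  ext₂ := by
    rintro T hT ⟨N₁, hN₁⟩ ⟨N₃, hN₃⟩
    refine ⟨max N₁ N₃, fun Z hZ i hi f => ?_⟩
    obtain ⟨g, rfl⟩ := Triangle.coyoneda_exact₂ _ (Triangle.shift_distinguished T hT i) f
      (hN₃ Z hZ i (le_of_max_le_right hi) _)
    rw [hN₁ Z hZ i (le_of_max_le_left hi) g]
    exact zero_comp

lemma hom_eq_zero_of_mem_auslander {X Y : C} (hX : X ∈ Auslander ω)
    (hY : Y ∈ rightPerp ω) (hY' : Y ∈ eventualRightPerp (leftPerp ω))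
    (u : X ⟶ Y⟦(1 : ℤ)⟧) : u = 0 := by
  obtain ⟨T, M, f, g, h, rfl, hT, hM, hperp⟩ := hX
  obtain ⟨N, hN⟩ := hY'
  have step : ∀ k : ℕ, (∀ ψ : T (k + 1) ⟶ Y⟦((k + 1 : ℕ) : ℤ) + 1⟧, ψ = 0) →
      ∀ ψ : T k ⟶ Y⟦(k : ℤ) + 1⟧, ψ = 0 := fun k hk =>
    hom_eq_zero_of_distTriang (hT k) ((hM k).hom_eq_zero_of_mem_rightPerp hY (by omega))
      (forall_hom_eq_zero_of_iso
        ((shiftFunctorAdd' C ((k : ℤ) + 1) 1 ((k + 1 : ℕ) + 1) (by push_cast; ring)).app Y) hk)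
  have down : ∀ j k : ℕ, N ≤ j + k + 1 → ∀ ψ : T k ⟶ Y⟦(k : ℤ) + 1⟧, ψ = 0 := by
    intro j
    induction j with
    | zero => exact fun k hk => hN _ (hperp k) _ (by omega)
    | succ j ih => exact fun k hk => step k (ih (k + 1) (by omega))
  simpa using down N.toNat 0 (by omega) u

end Triangulated

end RelSing

/-- For a semi-selforthogonal `ω`, `G_ω ∩ ⟨add ω⟩ = add ω`. -/
theorem stmt10 (ω : Set C) (hω : SemiSelfOrth ω) :
    Gor ω ∩ genTriang {A | AddCat ω A} = {A | AddCat ω A} := by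
  ext A
  refine ⟨fun ⟨⟨hco, haus⟩, hgen⟩ => ?_, fun hA =>
    ⟨⟨hω.addCat_mem_coAuslander hA, hω.addCat_mem_auslander hA⟩, subset_genTriang hA⟩⟩
  obtain ⟨T, M, f, g, h, rfl, hT, hM, hperp⟩ := hco
  have hT₁ : T 1 ∈ genTriang {A | AddCat ω A} :=
    isTriangulatedSub_genTriang.ext₁ (hT 0) (subset_genTriang (hM 0)) hgen
  have hT₁' : T 1 ∈ eventualRightPerp (leftPerp ω) :=
    genTriang_subset addCat_subset_eventualRightPerp isTriangulatedSub_eventualRightPerp hT₁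
  exact AddCat.of_distTriang_mor₃_eq_zero (hT 0)
    (hom_eq_zero_of_mem_auslander haus (hperp 1) hT₁' (h 0)) (hM 0)
end
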